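/- (Theorem 2.2, MSE value.) Under the hypotheses of Theorem 2.2—K symmetric with nonnegative quadratic form, G = (G₁,…,G_m) and matrix D satisfying ∫_T f_i dG_j = δ_{ij} and ∫_T K(t,s) G(dt) = D f(s) for all s ∈ T, and ζ_ν satisfying ∫_T K(t,s) ζ_ν(dt) = ∫_S K(s,u) ν(du) for all s ∈ T—let c = ∫_S f dν − ∫_T f dζ_ν, Q* = ζ_ν + Σ_j c_j G_j, and assume additionally that D = ∬_{T×T} K(t,s) G(dt) Gᵀ(ds) (entrywise D_{ij} = ∬ K(t,s) G_i(dt) G_j(ds)). Then M(Q*) = ∬_{S×S} K(s,u) ν(ds)ν(du) + cᵀ D ∫_S f(s) ν(ds) − ∬ K(t,u) ν(du) Q*(dt), where M is the MSE functional M(Q) = ∬_{S×S} K dν dν − 2 ∬_{S×T} K(t,s) ν(dt)Q(ds) + ∬_{T×T} K dQ dQ. -/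

import Mathlib

open MeasureTheory

/-- Integral of a real function against a finite signed measure, via the Jordan
decomposition. -/
noncomputable def sInt {α : Type*} [MeasurableSpace α] (μ : SignedMeasure α) (g : α → ℝ) : ℝ :=
  (∫ x, g x ∂μ.toJordanDecomposition.posPart) - ∫ x, g x ∂μ.toJordanDecomposition.negPart

/-!
The minimiser `Q* = ζ_ν + Σ_j c_j G_j` reproduces the kernel up to a trend term,
`∫ K(t,s) Q*(dt) = ∫ K(s,u) ν(du) + (cᵀD f)(s)`, and is unbiased, `∫ f dQ* = ∫ f dν`.
Integrating the first identity against `Q*` and using unbiasedness turns the quadratic term of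
`M(Q*)` into `∬ K(t,u) ν(du) Q*(dt) + cᵀD ∫ f dν`, while Fubini and the symmetry of `K` identify
the cross term with `∬ K(t,u) ν(du) Q*(dt)`.

Linearity of `sInt` in the measure and in the integrand comes from identifying it with Mathlib's
integral against a vector measure.
-/

open VectorMeasure

section

variable {α β : Type*} [MeasurableSpace α] [MeasurableSpace β]

lemma Measurable.integrable_of_abs_le {g : α → ℝ} (hg : Measurable g) {C : ℝ}
    (hC : ∀ x, |g x| ≤ C) (P : Measure α) [IsFiniteMeasure P] : Integrable g P :=
  .of_bound hg.aestronglyMeasurable C (ae_of_all _ hC)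

instance (μ : SignedMeasure α) : IsFiniteMeasure μ.variation :=
  μ.totalVariation_eq_variation ▸ inferInstance

lemma MeasureTheory.SignedMeasure.posPart_le_variation (μ : SignedMeasure α) :
    μ.toJordanDecomposition.posPart ≤ μ.variation :=
  μ.totalVariation_eq_variation ▸ Measure.le_add_right le_rfl

lemma MeasureTheory.SignedMeasure.negPart_le_variation (μ : SignedMeasure α) :
    μ.toJordanDecomposition.negPart ≤ μ.variation :=
  μ.totalVariation_eq_variation ▸ Measure.le_add_left le_rfl

lemma sInt_eq_integral {μ : SignedMeasure α} {g : α → ℝ} (hg : μ.Integrable g) :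
    sInt μ g = ∫ᵛ x, g x ∂<•μ := by
  conv_rhs => rw [← μ.toSignedMeasure_toJordanDecomposition]
  rw [JordanDecomposition.toSignedMeasure, integral_sub_vectorMeasure, integral_toSignedMeasure,
    integral_toSignedMeasure, sInt]
  · rw [VectorMeasure.Integrable, Measure.variation_toSignedMeasure]
    exact hg.mono_measure μ.posPart_le_variation
  · rw [VectorMeasure.Integrable, Measure.variation_toSignedMeasure]
    exact hg.mono_measure μ.negPart_le_variation

lemma sInt_add_measure {μ ρ : SignedMeasure α} {g : α → ℝ} (hμ : μ.Integrable g)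
    (hρ : ρ.Integrable g) : sInt (μ + ρ) g = sInt μ g + sInt ρ g := by
  rw [sInt_eq_integral hμ, sInt_eq_integral hρ, sInt_eq_integral (hμ.add_vectorMeasure hρ),
    integral_add_vectorMeasure hμ hρ]

lemma sInt_smul_measure {μ : SignedMeasure α} {g : α → ℝ} (c : ℝ) (hμ : μ.Integrable g) :
    sInt (c • μ) g = c * sInt μ g := by
  rw [sInt_eq_integral hμ, sInt_eq_integral (hμ.smul_vectorMeasure c),
    integral_smul_vectorMeasure, smul_eq_mul]

lemma sInt_finset_sum_measure {ι : Type*} {s : Finset ι} {μ : ι → SignedMeasure α} {g : α → ℝ}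
    (hμ : ∀ i ∈ s, (μ i).Integrable g) : sInt (∑ i ∈ s, μ i) g = ∑ i ∈ s, sInt (μ i) g := by
  rw [sInt_eq_integral (Integrable.finsetSum_vectorMeasure hμ),
    integral_finsetSum_vectorMeasure hμ]
  exact Finset.sum_congr rfl fun i hi => (sInt_eq_integral (hμ i hi)).symm

lemma sInt_add {μ : SignedMeasure α} {g h : α → ℝ} (hg : μ.Integrable g) (hh : μ.Integrable h) :
    sInt μ (fun x => g x + h x) = sInt μ g + sInt μ h := by
  rw [sInt_eq_integral hg, sInt_eq_integral hh, sInt_eq_integral (hg.fun_add hh),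
    integral_fun_add hg hh]

lemma sInt_sub {μ : SignedMeasure α} {g h : α → ℝ} (hg : μ.Integrable g) (hh : μ.Integrable h) :
    sInt μ (fun x => g x - h x) = sInt μ g - sInt μ h := by
  rw [sInt_eq_integral hg, sInt_eq_integral hh, sInt_eq_integral (hg.fun_sub hh),
    integral_fun_sub hg hh]

lemma sInt_finset_sum {ι : Type*} (s : Finset ι) {μ : SignedMeasure α} {g : ι → α → ℝ}
    (hg : ∀ i ∈ s, μ.Integrable (g i)) :
    sInt μ (fun x => ∑ i ∈ s, g i x) = ∑ i ∈ s, sInt μ (g i) := by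
  rw [sInt_eq_integral (Integrable.fun_finsetSum s hg), VectorMeasure.integral_finsetSum s hg]
  exact Finset.sum_congr rfl fun i hi => (sInt_eq_integral (hg i hi)).symm

lemma sInt_const_mul (μ : SignedMeasure α) (g : α → ℝ) (c : ℝ) :
    sInt μ (fun x => c * g x) = c * sInt μ g := by
  rw [sInt, sInt, integral_const_mul, integral_const_mul, mul_sub]

variable {k : α → β → ℝ} {C : ℝ}

lemma integrable_integral_right (hk : Measurable (Function.uncurry k)) (hC : ∀ x y, |k x y| ≤ C)
    (P : Measure β) [IsFiniteMeasure P] (Q : Measure α) [IsFiniteMeasure Q] :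
    Integrable (fun x => ∫ y, k x y ∂P) Q :=
  .of_bound hk.stronglyMeasurable.integral_prod_right'.aestronglyMeasurable (C * P.real .univ)
    (ae_of_all _ fun x => norm_integral_le_of_norm_le_const (ae_of_all _ (hC x)))

lemma integrable_sInt_right (hk : Measurable (Function.uncurry k)) (hC : ∀ x y, |k x y| ≤ C)
    (μ : SignedMeasure β) (Q : Measure α) [IsFiniteMeasure Q] :
    Integrable (fun x => sInt μ (k x)) Q :=
  (integrable_integral_right hk hC _ Q).sub (integrable_integral_right hk hC _ Q)

lemma sInt_integral_comm (hk : Measurable (Function.uncurry k)) (hC : ∀ x y, |k x y| ≤ C)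
    (μ : SignedMeasure α) (P : Measure β) [IsFiniteMeasure P] :
    sInt μ (fun x => ∫ y, k x y ∂P) = ∫ y, sInt μ (fun x => k x y) ∂P := by
  have hk' : Measurable (Function.uncurry fun y x => k x y) := hk.comp measurable_swap
  have hprod : ∀ (Q : Measure α) [IsFiniteMeasure Q], Integrable (Function.uncurry k) (Q.prod P) :=
    fun Q _ => hk.integrable_of_abs_le (fun p => hC p.1 p.2) _
  rw [sInt, integral_integral_swap (hprod _), integral_integral_swap (hprod _),
    ← MeasureTheory.integral_sub]
  · rfl
  · exact integrable_integral_right hk' (fun y x => hC x y) _ P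
  · exact integrable_integral_right hk' (fun y x => hC x y) _ P

lemma sInt_comm (hk : Measurable (Function.uncurry k)) (hC : ∀ x y, |k x y| ≤ C)
    (μ : SignedMeasure α) (ρ : SignedMeasure β) :
    sInt μ (fun x => sInt ρ (k x)) = sInt ρ (fun y => sInt μ (fun x => k x y)) := by
  calc sInt μ (fun x => sInt ρ (k x))
      = sInt μ (fun x => ∫ y, k x y ∂ρ.toJordanDecomposition.posPart)
        - sInt μ (fun x => ∫ y, k x y ∂ρ.toJordanDecomposition.negPart) :=
        sInt_sub (integrable_integral_right hk hC _ _) (integrable_integral_right hk hC _ _)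
    _ = sInt ρ (fun y => sInt μ (fun x => k x y)) := by
        rw [sInt_integral_comm hk hC, sInt_integral_comm hk hC, sInt]

end

theorem blup_average_mse_value_general {d m : ℕ}
    (T S : Set (Fin d → ℝ))
    (K : (Fin d → ℝ) → (Fin d → ℝ) → ℝ)
    (hKmeas : Measurable (Function.uncurry K))
    (hKbd : ∃ C, ∀ t s, |K t s| ≤ C)
    (hKsym : ∀ t s, K t s = K s t)
    (f : (Fin d → ℝ) → Fin m → ℝ)
    (hfmeas : ∀ i, Measurable fun t => f t i)
    (hfbd : ∃ C, ∀ t i, |f t i| ≤ C)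
    (ν : SignedMeasure S)
    (G : Fin m → SignedMeasure T) (D : Fin m → Fin m → ℝ)
    (hG1 : ∀ i j, sInt (G j) (fun t => f t.1 i) = if i = j then 1 else 0)
    (hG2 : ∀ (s : T) (k : Fin m),
      sInt (G k) (fun t => K t.1 s.1) = ∑ j, D k j * f s.1 j)
    (ζν : SignedMeasure T)
    (hζν : ∀ s : T, sInt ζν (fun t => K t.1 s.1) = sInt ν fun u => K s.1 u.1)
    (c : Fin m → ℝ)
    (hc : ∀ i, c i = (sInt ν fun s => f s.1 i) - sInt ζν fun t => f t.1 i)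
    (Qstar : SignedMeasure T)
    (hQstar : Qstar = ζν + ∑ j, c j • G j)
    (M : SignedMeasure T → ℝ)
    (hM : ∀ Q : SignedMeasure T,
      M Q = (sInt ν fun t => sInt ν fun s => K t.1 s.1)
        - 2 * (sInt ν fun t => sInt Q fun s => K t.1 s.1)
        + (sInt Q fun t => sInt Q fun s => K t.1 s.1)) :
    M Qstar = (sInt ν fun s => sInt ν fun u => K s.1 u.1)
      + (∑ i, c i * ∑ j, D i j * sInt ν fun s => f s.1 j)
      - sInt Qstar (fun t => sInt ν fun u => K t.1 u.1) := by
  obtain ⟨CK, hCK⟩ := hKbd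
  obtain ⟨Cf, hCf⟩ := hfbd
  have hK : ∀ X Y : Set (Fin d → ℝ), Measurable (Function.uncurry fun (x : X) (y : Y) => K x y) :=
    fun _ _ => hKmeas.comp (measurable_subtype_coe.prodMap measurable_subtype_coe)
  have hf_int : ∀ (μ : SignedMeasure T) j, μ.Integrable fun t => f t.1 j := fun μ j =>
    ((hfmeas j).comp measurable_subtype_coe).integrable_of_abs_le (fun t => hCf t.1 j) _
  have hK_int : ∀ (μ : SignedMeasure T) (s : T), μ.Integrable fun t => K t.1 s.1 := fun μ s =>
    ((hKmeas.comp (measurable_subtype_coe.prodMk measurable_const)).integrable_of_abs_le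
      (fun t => hCK t.1 s.1) _)
  set L : T → ℝ := fun t => sInt ν fun u => K t.1 u.1
  have hL_int : Qstar.Integrable L := integrable_sInt_right (hK T S) (fun t u => hCK t.1 u.1) ν _
  set a : Fin m → ℝ := Matrix.vecMul c D
  have hcD : ∀ x : Fin m → ℝ, ∑ i, c i * ∑ j, D i j * x j = ∑ j, a j * x j :=
    Matrix.dotProduct_mulVec c D
  have hQ : ∀ g : T → ℝ, (∀ μ : SignedMeasure T, μ.Integrable g) →
      sInt Qstar g = sInt ζν g + ∑ j, c j * sInt (G j) g := fun g hg => by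
    rw [hQstar, sInt_add_measure (hg _) (hg _), sInt_finset_sum_measure fun j _ => hg _]
    simp_rw [sInt_smul_measure _ (hg _)]
  have unbiased : ∀ j, sInt Qstar (fun t => f t.1 j) = sInt ν fun s => f s.1 j := fun j => by
    simp [hQ _ (hf_int · j), hG1, hc]
  have reproducing : ∀ t : T, sInt Qstar (fun s => K t.1 s.1) = L t + ∑ j, a j * f t.1 j := fun t => by
    simp_rw [hKsym t.1, hQ _ (hK_int · t), hG2, hζν, hcD, L]
  have cross : sInt ν (fun t => sInt Qstar fun s => K t.1 s.1) = sInt Qstar L := by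
    rw [sInt_comm (hK S T) fun u t => hCK u t]
    exact congrArg (sInt Qstar) (funext fun t => congrArg (sInt ν) (funext fun u => hKsym _ _))
  have quad : sInt Qstar (fun t => sInt Qstar fun s => K t.1 s.1)
      = sInt Qstar L + ∑ j, a j * sInt ν fun s => f s.1 j := by
    simp_rw [reproducing]
    rw [sInt_add hL_int (Integrable.fun_finsetSum _ fun j _ => (hf_int Qstar j).const_mul (a j)),
      sInt_finset_sum _ fun j _ => (hf_int Qstar j).const_mul (a j)]
    simp_rw [sInt_const_mul, unbiased]
  rw [hM, cross, quad, hcD]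
  ring

/-- Theorem 2.2, MSE value.  Under the hypotheses of Theorem 2.2, with
`D` the covariance matrix of the BLUE (`D_{ij} = ∬ K dG_i dG_j`), the minimal mean squared
error equals
`M(Q*) = ∬_{S×S} K dν dν + cᵀ D ∫_S f dν − ∬ K(t,u) ν(du) Q*(dt)`. -/
theorem blup_average_mse_value {d m : ℕ}
    (T S : Set (Fin d → ℝ)) (hT : MeasurableSet T) (hS : MeasurableSet S)
    (K : (Fin d → ℝ) → (Fin d → ℝ) → ℝ)
    (hKmeas : Measurable (Function.uncurry K))
    (hKbd : ∃ C, ∀ t s, |K t s| ≤ C)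
    (hKsym : ∀ t s, K t s = K s t)
    (hKpos : ∀ R : SignedMeasure T, 0 ≤ sInt R fun t => sInt R fun s => K t.1 s.1)
    (f : (Fin d → ℝ) → Fin m → ℝ)
    (hfmeas : ∀ i, Measurable fun t => f t i)
    (hfbd : ∃ C, ∀ t i, |f t i| ≤ C)
    (ν : SignedMeasure S)
    (G : Fin m → SignedMeasure T) (D : Fin m → Fin m → ℝ)
    (hG1 : ∀ i j, sInt (G j) (fun t => f t.1 i) = if i = j then 1 else 0)
    (hG2 : ∀ (s : T) (k : Fin m),
      sInt (G k) (fun t => K t.1 s.1) = ∑ j, D k j * f s.1 j)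
    -- `D` is the covariance matrix of the BLUE:
    (hD : ∀ i j, D i j = sInt (G i) fun t => sInt (G j) fun s => K t.1 s.1)
    (ζν : SignedMeasure T)
    (hζν : ∀ s : T, sInt ζν (fun t => K t.1 s.1) = sInt ν fun u => K s.1 u.1)
    (c : Fin m → ℝ)
    (hc : ∀ i, c i = (sInt ν fun s => f s.1 i) - sInt ζν fun t => f t.1 i)
    (Qstar : SignedMeasure T)
    (hQstar : Qstar = ζν + ∑ j, c j • G j)
    (M : SignedMeasure T → ℝ)
    (hM : ∀ Q : SignedMeasure T,
      M Q = (sInt ν fun t => sInt ν fun s => K t.1 s.1)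
        - 2 * (sInt ν fun t => sInt Q fun s => K t.1 s.1)
        + (sInt Q fun t => sInt Q fun s => K t.1 s.1)) :
    M Qstar = (sInt ν fun s => sInt ν fun u => K s.1 u.1)
      + (∑ i, c i * ∑ j, D i j * sInt ν fun s => f s.1 j)
      - sInt Qstar (fun t => sInt ν fun u => K t.1 u.1) :=
  blup_average_mse_value_general T S K hKmeas hKbd hKsym f hfmeas hfbd ν G D hG1 hG2 ζν hζν c hc
    Qstar hQstar M hM
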